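/- Let d ≥ 1, c > 0, C₀ > 0 and M > 0. Let f : ℝ^d → ℂ be twice continuously differentiable with all second-order partial derivatives bounded by M, and suppose |f(x)| ≤ C₀ e^{−c|x|} for all x ∈ ℝ^d. Then there exists C' > 0 (depending on d, c, C₀, M) such that for every j ∈ {1,…,d} and every x ∈ ℝ^d, |∂_{x_j} f(x)| ≤ C' e^{−c|x|/2}. -/

import Mathlib

/-!
Taylor's formula in direction `e_j` with step `h` gives
`h ‖∂_j f(x)‖ ≤ ‖f(x + h e_j)‖ + ‖f(x)‖ + M h²`. Choosing `h = exp(-c‖x‖/2) ≤ 1`, both values of `f`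
are `O(exp(-c‖x‖)) = O(h²)`, and dividing by `h` gives the bound.
-/

open Real

section LineTaylor

variable {E F : Type*} [NormedAddCommGroup E] [NormedSpace ℝ E]
  [NormedAddCommGroup F] [NormedSpace ℝ F] {f : E → F}

theorem DifferentiableAt.hasDerivAt_comp_add_smul {x v : E} {t : ℝ}
    (hf : DifferentiableAt ℝ f (x + t • v)) :
    HasDerivAt (fun s : ℝ => f (x + s • v)) (fderiv ℝ f (x + t • v) v) t := by
  have hline : HasDerivAt (fun s : ℝ => x + s • v) v t := by
    simpa using ((hasDerivAt_id t).smul_const v).const_add x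
  exact hf.hasFDerivAt.comp_hasDerivAt t hline

variable {v : E} {M : ℝ} (hf' : Differentiable ℝ fun y => fderiv ℝ f y v)
  (hM : ∀ y, ‖fderiv ℝ (fun y => fderiv ℝ f y v) y v‖ ≤ M)
include hf' hM

theorem norm_fderiv_add_smul_apply_sub_le (x : E) (t : ℝ) :
    ‖fderiv ℝ f (x + t • v) v - fderiv ℝ f x v‖ ≤ M * |t| := by
  have hderiv : ∀ s : ℝ, HasDerivWithinAt (fun s : ℝ => fderiv ℝ f (x + s • v) v)
        (fderiv ℝ (fun y => fderiv ℝ f y v) (x + s • v) v) Set.univ s :=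
    fun s => (hf' _).hasDerivAt_comp_add_smul.hasDerivWithinAt
  simpa [← Real.norm_eq_abs] using convex_univ.norm_image_sub_le_of_norm_hasDerivWithin_le
    (fun s _ => hderiv s) (fun s _ => hM _) (Set.mem_univ 0) (Set.mem_univ t)

theorem norm_sub_sub_smul_fderiv_apply_le (hf : Differentiable ℝ f) (x : E) (h : ℝ) :
    ‖f (x + h • v) - f x - h • fderiv ℝ f x v‖ ≤ M * h ^ 2 := by
  have hM0 : 0 ≤ M := (norm_nonneg _).trans (hM 0)
  let G : ℝ → F := fun t => f (x + t • v) - f x - t • fderiv ℝ f x v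
  have hG : ∀ t ∈ Set.uIcc 0 h,
      HasDerivWithinAt G (fderiv ℝ f (x + t • v) v - fderiv ℝ f x v) (Set.uIcc 0 h) t := by
    intro t _
    simpa [G] using (((hf _).hasDerivAt_comp_add_smul.sub_const (f x)).fun_sub
      ((hasDerivAt_id t).smul_const (fderiv ℝ f x v))).hasDerivWithinAt
  have hG' : ∀ t ∈ Set.uIcc 0 h, ‖fderiv ℝ f (x + t • v) v - fderiv ℝ f x v‖ ≤ M * |h| := by
    intro t ht
    refine (norm_fderiv_add_smul_apply_sub_le hf' hM x t).trans ?_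
    exact mul_le_mul_of_nonneg_left (by simpa using Set.abs_sub_left_of_mem_uIcc ht) hM0
  have := (convex_uIcc 0 h).norm_image_sub_le_of_norm_hasDerivWithin_le hG hG'
    Set.left_mem_uIcc Set.right_mem_uIcc
  simpa [G, ← sq_abs h, pow_two, mul_assoc] using this

end LineTaylor

theorem exp_neg_mul_norm_add_le {E : Type*} [SeminormedAddCommGroup E] {c : ℝ} (hc : 0 ≤ c)
    (x w : E) : exp (-c * ‖x + w‖) ≤ exp (c * ‖w‖) * exp (-c * ‖x‖) := by
  rw [← exp_add, exp_le_exp]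
  have : ‖x‖ ≤ ‖x + w‖ + ‖w‖ := by simpa using norm_sub_le (x + w) w
  nlinarith

theorem stmt12 (d : ℕ) (c C₀ M : ℝ) (hc : 0 < c) (hC₀ : 0 < C₀) (hM : 0 < M)
    (f : EuclideanSpace ℝ (Fin d) → ℂ) (hf : ContDiff ℝ 2 f)
    (hsecond : ∀ (x : EuclideanSpace ℝ (Fin d)) (i j : Fin d),
      ‖fderiv ℝ (fun y => fderiv ℝ f y (EuclideanSpace.single j 1)) x
          (EuclideanSpace.single i 1)‖ ≤ M)
    (hdecay : ∀ x : EuclideanSpace ℝ (Fin d), ‖f x‖ ≤ C₀ * Real.exp (-c * ‖x‖)) :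
    ∃ C' : ℝ, 0 < C' ∧ ∀ (j : Fin d) (x : EuclideanSpace ℝ (Fin d)),
      ‖fderiv ℝ f x (EuclideanSpace.single j 1)‖ ≤ C' * Real.exp (-c * ‖x‖ / 2) := by
  refine ⟨C₀ * exp c + C₀ + M, by positivity, fun j x => ?_⟩
  set v : EuclideanSpace ℝ (Fin d) := EuclideanSpace.single j 1
  set h := exp (-c * ‖x‖ / 2)
  have hh0 : 0 < h := exp_pos _
  have hh1 : h ≤ 1 := exp_le_one_iff.mpr (by nlinarith [norm_nonneg x])
  have hh2 : exp (-c * ‖x‖) = h ^ 2 := by rw [← exp_nat_mul]; ring_nf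
  have hdiff' : Differentiable ℝ fun y => fderiv ℝ f y v :=
    ((hf.fderiv_right (m := 1) (by norm_num)).clm_apply contDiff_const).differentiable
      (by norm_num)
  have htaylor := norm_sub_sub_smul_fderiv_apply_le hdiff' (fun y => hsecond y j j)
    (hf.differentiable (by norm_num)) x h
  have hfar : ‖f (x + h • v)‖ ≤ C₀ * exp c * h ^ 2 := by
    have hhv : ‖h • v‖ ≤ 1 := by simpa [v, norm_smul, abs_of_pos hh0] using hh1
    calc ‖f (x + h • v)‖ ≤ C₀ * (exp (c * ‖h • v‖) * exp (-c * ‖x‖)) :=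
          (hdecay _).trans (by gcongr; exact exp_neg_mul_norm_add_le hc.le x _)
      _ ≤ C₀ * exp c * h ^ 2 := by
          rw [hh2, ← mul_assoc]
          gcongr
          exact mul_le_of_le_one_right hc.le hhv
  have hnear : ‖f x‖ ≤ C₀ * h ^ 2 := hh2 ▸ hdecay x
  have hstep : h * ‖fderiv ℝ f x v‖ ≤ ‖f (x + h • v)‖ + ‖f x‖ + M * h ^ 2 := by
    have := norm_sub_le (f (x + h • v) - f x) (f (x + h • v) - f x - h • fderiv ℝ f x v)
    simp only [sub_sub_cancel, norm_smul, norm_of_nonneg hh0.le] at this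
    linarith [norm_sub_le (f (x + h • v)) (f x)]
  exact le_of_mul_le_mul_left (by linarith) hh0
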